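/- arXiv:2510.26842 — 4 statements merged into one kernel-verified Lean document; each statement's English description precedes it below -/
import Mathlib

section
/- For all integers s ≥ 1 and n ≥ 1, the Lah number with higher level satisfies L_s(n, n−1) = 2^s · Σ_{j=1}^{n−1} j^s. -/
open Finset Polynomial

/-- Lah numbers with higher level: `lahH s n k` satisfies
`lahH s 0 0 = 1`, `lahH s n 0 = lahH s 0 k = 0` for `n, k > 0`, and
`lahH s n k = lahH s (n-1) (k-1) + (n+k-1)^s * lahH s (n-1) k` for `n, k ≥ 1`. -/
def lahH (s : ℕ) : ℕ → ℕ → ℕ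
  | 0, 0 => 1
  | 0, _ + 1 => 0
  | _ + 1, 0 => 0
  | n + 1, k + 1 => lahH s n k + (n + k + 1) ^ s * lahH s n (k + 1)

/-- Stirling numbers of the first kind with higher level. -/
def stirling1H (s : ℕ) : ℕ → ℕ → ℕ
  | 0, 0 => 1
  | 0, _ + 1 => 0
  | _ + 1, 0 => 0
  | n + 1, k + 1 => stirling1H s n k + n ^ s * stirling1H s n (k + 1)

/-- Stirling numbers of the second kind with higher level. -/
def stirling2H (s : ℕ) : ℕ → ℕ → ℕ
  | 0, 0 => 1
  | 0, _ + 1 => 0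
  | _ + 1, 0 => 0
  | n + 1, k + 1 => stirling2H s n k + (k + 1) ^ s * stirling2H s n (k + 1)

/-- Ordinary Stirling numbers of the second kind. -/
def stirling2 : ℕ → ℕ → ℕ
  | 0, 0 => 1
  | 0, _ + 1 => 0
  | _ + 1, 0 => 0
  | n + 1, k + 1 => stirling2 n k + (k + 1) * stirling2 n (k + 1)

/-- Lah numbers of order `s`: `lahOrd s n k = ∑_{j=k}^{n} c_s(n,j) * S_s(j,k)`. -/
def lahOrd (s n k : ℕ) : ℕ := ∑ j ∈ Finset.Icc k n, stirling1H s n j * stirling2H s j k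

/-- Lah polynomial with higher level `L_n^s(x) = ∑_{k=0}^{n} L_s(n,k) x^k`. -/
noncomputable def lahHPoly (s n : ℕ) : Polynomial ℤ :=
  ∑ k ∈ Finset.range (n + 1), Polynomial.C (lahH s n k : ℤ) * Polynomial.X ^ k

/-- Lah polynomial of order `s`: `ℒ_n^s(x) = ∑_{k=0}^{n} T_s(n,k) x^k`. -/
noncomputable def lahOrdPoly (s n : ℕ) : Polynomial ℤ :=
  ∑ k ∈ Finset.range (n + 1), Polynomial.C (lahOrd s n k : ℤ) * Polynomial.X ^ k

lemma lahH_eq_zero (s : ℕ) : ∀ n k, n < k → lahH s n k = 0 := by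
  intro n
  induction n with
  | zero => intro k hk; match k, hk with | k+1, _ => rfl
  | succ n ih =>
    intro k hk
    match k, hk with
    | k+1, hk =>
      rw [lahH, ih k (by omega), ih (k+1) (by omega)]
      ring

lemma lahH_diag (s : ℕ) : ∀ n, lahH s n n = 1 := by
  intro n
  induction n with
  | zero => rfl
  | succ n ih =>
    rw [lahH, ih, lahH_eq_zero s n (n+1) (by omega)]
    ring

theorem lahH_sub_one (s n : ℕ) (hs : 1 ≤ s) (hn : 1 ≤ n) :
    lahH s n (n - 1) = 2 ^ s * ∑ j ∈ Finset.Icc 1 (n - 1), j ^ s := by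
  induction n with
  | zero => omega
  | succ n ih =>
    rcases Nat.eq_zero_or_pos n with h | h
    · subst h; simp [lahH]
    · have hn1 : n - 1 + 1 = n := by omega
      have : lahH s (n+1) n = lahH s n (n-1) + (2*n)^s * lahH s n n := by
        conv_lhs => rw [show n = (n-1)+1 by omega]
        rw [lahH, hn1, show n + (n-1) + 1 = 2*n by omega]
      rw [show n + 1 - 1 = n from rfl, this, ih h, lahH_diag]
      rw [show n = (n-1)+1 by omega, Finset.sum_Icc_succ_top (by omega), hn1]
      ring
end

section
/- For all integers n ≥ 1 and s ≥ 1, the polynomial A_n^s(x) = Σ_{k=0}^{n} (n+k)^s · L_s(n,k) · x^{n+k} satisfies A_n^s(x) = Σ_{i=0}^{s} S(s,i) · x^i · (d^i/dx^i) Q_n^s(x), where Q_n^s(x) = x^n · L_n^s(x), S(s,i) are the Stirling numbers of the second kind, and d^i/dx^i denotes the i-th iterated formal derivative of polynomials. -/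
open Finset Polynomial

/-- `Q_n^s(x) = x^n L_n^s(x)`. -/
noncomputable def Qpoly (s n : ℕ) : Polynomial ℤ := Polynomial.X ^ n * lahHPoly s n

/-- `A_n^s(x) = ∑_{k=0}^{n} (n+k)^s L_s(n,k) x^{n+k}`. -/
noncomputable def Apoly (s n : ℕ) : Polynomial ℤ :=
  ∑ k ∈ Finset.range (n + 1),
    Polynomial.C (((n + k) ^ s * lahH s n k : ℕ) : ℤ) * Polynomial.X ^ (n + k)

lemma stirling2_eq_zero : ∀ n k, n < k → stirling2 n k = 0 := by
  intro n
  induction n with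
  | zero =>
    intro k hk
    obtain ⟨j, rfl⟩ := Nat.exists_eq_add_of_lt hk
    rfl
  | succ n ih =>
    intro k hk
    match k, hk with
    | j + 1, hk =>
      show stirling2 n j + (j + 1) * stirling2 n (j + 1) = 0
      rw [ih j (by omega), ih (j + 1) (by omega)]; ring

lemma stirling_desc (s m : ℕ) :
    ∑ i ∈ Finset.range (s + 1), stirling2 s i * m.descFactorial i = m ^ s := by
  induction s with
  | zero => simp [stirling2]
  | succ s ih =>
    have key : ∀ i, m * Nat.descFactorial m i =
        Nat.descFactorial m (i + 1) + i * Nat.descFactorial m i := by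
      intro i
      rcases le_or_gt i m with h | h
      · rw [Nat.descFactorial_succ]
        have h2 : m - i + i = m := Nat.sub_add_cancel h
        nlinarith [h2]
      · rw [Nat.descFactorial_eq_zero_iff_lt.2 h,
          Nat.descFactorial_eq_zero_iff_lt.2 (Nat.lt_succ_of_lt h)]
        ring
    have step : ∀ i, stirling2 (s + 1) (i + 1) = stirling2 s i + (i + 1) * stirling2 s (i + 1) :=
      fun i => rfl
    rw [Finset.sum_range_succ']
    simp only [step]
    have expand : ∑ i ∈ Finset.range (s + 1),
        (stirling2 s i + (i + 1) * stirling2 s (i + 1)) * m.descFactorial (i + 1)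
        = ∑ i ∈ Finset.range (s + 1), stirling2 s i * m.descFactorial (i + 1)
          + ∑ i ∈ Finset.range (s + 1), (i + 1) * stirling2 s (i + 1) * m.descFactorial (i + 1) := by
      rw [← Finset.sum_add_distrib]
      exact Finset.sum_congr rfl fun i _ => by ring
    have shift : ∑ i ∈ Finset.range (s + 1), (i + 1) * stirling2 s (i + 1) * m.descFactorial (i + 1)
        = ∑ i ∈ Finset.range (s + 1), i * stirling2 s i * m.descFactorial i := by
      have := Finset.sum_range_succ' (fun i => i * stirling2 s i * m.descFactorial i) (s + 1)
      rw [Finset.sum_range_succ] at this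
      simp only [Nat.zero_mul, Nat.mul_zero, zero_mul, add_zero,
        stirling2_eq_zero s (s + 1) (Nat.lt_succ_self s), Nat.mul_zero, mul_zero, zero_mul] at this
      omega
    rw [expand, shift]
    have : m ^ (s + 1) = ∑ i ∈ Finset.range (s + 1), stirling2 s i * (m * m.descFactorial i) := by
      rw [pow_succ, ← ih, Finset.sum_mul]
      exact Finset.sum_congr rfl fun i _ => by ring
    rw [this]
    simp only [key]
    rw [show (∑ i ∈ Finset.range (s + 1),
        stirling2 s i * (Nat.descFactorial m (i + 1) + i * Nat.descFactorial m i))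
        = ∑ i ∈ Finset.range (s + 1), (stirling2 s i * Nat.descFactorial m (i + 1)
          + i * stirling2 s i * Nat.descFactorial m i) from
      Finset.sum_congr rfl fun i _ => by ring]
    rw [Finset.sum_add_distrib]
    have hz : stirling2 (s + 1) 0 * m.descFactorial 0 = 0 := by
      simp [show stirling2 (s + 1) 0 = 0 from rfl]
    omega

lemma key_poly (s m : ℕ) :
    ∑ i ∈ Finset.range (s + 1),
      Polynomial.C (stirling2 s i : ℤ) * Polynomial.X ^ i *
        (Polynomial.derivative^[i] ((Polynomial.X : Polynomial ℤ) ^ m))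
    = Polynomial.C ((m : ℤ) ^ s) * Polynomial.X ^ m := by
  have term : ∀ i, Polynomial.C (stirling2 s i : ℤ) * Polynomial.X ^ i *
      (Polynomial.derivative^[i] ((Polynomial.X : Polynomial ℤ) ^ m))
      = Polynomial.C ((stirling2 s i * m.descFactorial i : ℕ) : ℤ) * Polynomial.X ^ m := by
    intro i
    rw [Polynomial.iterate_derivative_X_pow_eq_C_mul]
    rcases le_or_gt i m with h | h
    · have hm : (Polynomial.X : Polynomial ℤ) ^ i * Polynomial.X ^ (m - i) = Polynomial.X ^ m := by
        rw [← pow_add]; congr 1; omega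
      push_cast
      rw [Polynomial.C_mul]
      linear_combination (Polynomial.C ((stirling2 s i : ℤ)) *
        Polynomial.C ((m.descFactorial i : ℤ))) * hm
    · rw [Nat.descFactorial_eq_zero_iff_lt.2 h]
      simp
  rw [Finset.sum_congr rfl fun i _ => term i, ← Finset.sum_mul, ← map_sum]
  congr 2
  rw [← Nat.cast_sum, stirling_desc]
  push_cast
  rfl

lemma Qpoly_eq (s n : ℕ) :
    Qpoly s n = ∑ k ∈ Finset.range (n + 1),
      Polynomial.C (lahH s n k : ℤ) * Polynomial.X ^ (n + k) := by
  rw [Qpoly, lahHPoly, Finset.mul_sum]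
  exact Finset.sum_congr rfl fun k _ => by rw [pow_add]; ring

theorem Apoly_eq (n s : ℕ) (hn : 1 ≤ n) (hs : 1 ≤ s) :
    Apoly s n =
      ∑ i ∈ Finset.range (s + 1),
        Polynomial.C (stirling2 s i : ℤ) * Polynomial.X ^ i *
          (Polynomial.derivative^[i] (Qpoly s n)) := by
  rw [Qpoly_eq]
  have : ∀ i, Polynomial.derivative^[i]
      (∑ k ∈ Finset.range (n + 1), Polynomial.C (lahH s n k : ℤ) * Polynomial.X ^ (n + k))
      = ∑ k ∈ Finset.range (n + 1),
        Polynomial.C (lahH s n k : ℤ) * Polynomial.derivative^[i] (Polynomial.X ^ (n + k)) := by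
    intro i
    rw [Polynomial.iterate_derivative_sum]
    exact Finset.sum_congr rfl fun k _ => Polynomial.iterate_derivative_C_mul _ _ _
  simp only [this, Finset.mul_sum]
  rw [Finset.sum_comm]
  rw [Apoly]
  refine Finset.sum_congr rfl fun k _ => ?_
  have := key_poly s (n + k)
  calc Polynomial.C (((n + k) ^ s * lahH s n k : ℕ) : ℤ) * Polynomial.X ^ (n + k)
      = Polynomial.C (lahH s n k : ℤ) *
        (Polynomial.C (((n + k : ℕ) : ℤ) ^ s) * Polynomial.X ^ (n + k)) := by
        rw [show ((((n + k) ^ s * lahH s n k : ℕ)) : ℤ)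
            = (lahH s n k : ℤ) * (((n + k : ℕ) : ℤ)) ^ s by push_cast; ring,
          Polynomial.C_mul, mul_assoc]
    _ = _ := by
        rw [← this, Finset.mul_sum]
        exact Finset.sum_congr rfl fun i _ => by ring
end

section
/- For all integers s ≥ 1 and n ≥ 0, as an identity of polynomials with integer coefficients, the rising factorial with higher level expands in falling factorials with higher level with the Lah numbers of order s as coefficients: ∏_{i=0}^{n−1} (x + i^s) = Σ_{k=0}^{n} T_s(n,k) · ∏_{i=0}^{k−1} (x − i^s), where the empty products (n = 0 or k = 0) equal 1. -/
open Finset Polynomial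

theorem stirling1H_eq_zero (s : ℕ) : ∀ n k, n < k → stirling1H s n k = 0 := by
  intro n
  induction n with
  | zero => intro k hk; cases k with
    | zero => omega
    | succ k => rfl
  | succ n ih =>
    intro k hk
    cases k with
    | zero => omega
    | succ k =>
      simp only [stirling1H, ih k (by omega), ih (k+1) (by omega), mul_zero, add_zero]

theorem stirling2H_eq_zero (s : ℕ) : ∀ n k, n < k → stirling2H s n k = 0 := by
  intro n
  induction n with
  | zero => intro k hk; cases k with
    | zero => omega
    | succ k => rfl
  | succ n ih =>
    intro k hk
    cases k with
    | zero => omega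
    | succ k =>
      simp only [stirling2H, ih k (by omega), ih (k+1) (by omega), mul_zero, add_zero]

theorem risingH_expand (s n : ℕ) (hs : 1 ≤ s) :
    ∏ i ∈ Finset.range n, (Polynomial.X + Polynomial.C ((i : ℤ) ^ s)) =
      ∑ j ∈ Finset.range (n + 1), Polynomial.C (stirling1H s n j : ℤ) * Polynomial.X ^ j := by
  induction n with
  | zero => simp [stirling1H]
  | succ n ih =>
    rw [Finset.prod_range_succ, ih]
    rw [Finset.sum_range_succ' (fun k => Polynomial.C (stirling1H s (n+1) k : ℤ) * Polynomial.X ^ k)]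
    have hrec : ∀ x, (stirling1H s (n+1) (x+1) : ℤ)
        = (stirling1H s n x : ℤ) + (n:ℤ)^s * (stirling1H s n (x+1) : ℤ) := by
      intro x; simp only [stirling1H]; push_cast; ring
    have hz : (stirling1H s (n+1) 0 : ℤ) = 0 := by rfl
    rw [hz]
    simp only [map_zero, zero_mul, add_zero]
    rw [mul_add]
    have h1 : (∑ j ∈ Finset.range (n + 1), Polynomial.C (stirling1H s n j : ℤ) * Polynomial.X ^ j) * Polynomial.X
        = ∑ j ∈ Finset.range (n + 1), Polynomial.C (stirling1H s n j : ℤ) * Polynomial.X ^ (j + 1) := by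
      rw [Finset.sum_mul]; apply Finset.sum_congr rfl; intro j _; ring
    have h2 : (∑ j ∈ Finset.range (n + 1), Polynomial.C (stirling1H s n j : ℤ) * Polynomial.X ^ j) * Polynomial.C ((n : ℤ) ^ s)
        = ∑ j ∈ Finset.range (n + 1), Polynomial.C ((n : ℤ) ^ s * (stirling1H s n (j+1) : ℤ)) * Polynomial.X ^ (j + 1) := by
      rw [Finset.sum_mul]
      rw [Finset.sum_range_succ' (fun j => Polynomial.C (stirling1H s n j : ℤ) * Polynomial.X ^ j * Polynomial.C ((n : ℤ) ^ s))]
      rw [Finset.sum_range_succ (fun j => Polynomial.C ((n : ℤ) ^ s * (stirling1H s n (j+1) : ℤ)) * Polynomial.X ^ (j + 1))]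
      rw [stirling1H_eq_zero s n (n+1) (by omega)]
      have h0 : (n:ℤ)^s * (stirling1H s n 0 : ℤ) = 0 := by
        cases n with
        | zero => simp [zero_pow (by omega : s ≠ 0)]
        | succ m => show _ * ((0:ℕ):ℤ) = 0; simp
      have : Polynomial.C (stirling1H s n 0 : ℤ) * Polynomial.X ^ 0 * Polynomial.C ((n : ℤ) ^ s)
          = Polynomial.C ((n:ℤ)^s * (stirling1H s n 0 : ℤ)) := by
        rw [map_mul]; ring
      rw [this, h0]
      simp only [Nat.cast_zero, map_zero, mul_zero, zero_mul, add_zero]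
      apply Finset.sum_congr rfl
      intro j _
      rw [map_mul]; ring
    rw [h1, h2, ← Finset.sum_add_distrib]
    apply Finset.sum_congr rfl
    intro x _
    rw [hrec x, map_add, map_mul]
    ring

theorem pow_expand (s : ℕ) (hs : 1 ≤ s) (j : ℕ) :
    (Polynomial.X : Polynomial ℤ) ^ j =
      ∑ k ∈ Finset.range (j + 1), Polynomial.C (stirling2H s j k : ℤ) *
        ∏ i ∈ Finset.range k, (Polynomial.X - Polynomial.C ((i : ℤ) ^ s)) := by
  induction j with
  | zero => simp [stirling2H]
  | succ j ih =>
    have key : (Polynomial.X : Polynomial ℤ) ^ (j + 1) = Polynomial.X ^ j * Polynomial.X := by ring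
    rw [key, ih, Finset.sum_mul]
    have step : ∀ k : ℕ, (Polynomial.C (stirling2H s j k : ℤ) *
        ∏ i ∈ Finset.range k, (Polynomial.X - Polynomial.C ((i : ℤ) ^ s))) * Polynomial.X
        = Polynomial.C (stirling2H s j k : ℤ) *
            ∏ i ∈ Finset.range (k+1), (Polynomial.X - Polynomial.C ((i : ℤ) ^ s))
          + Polynomial.C ((k:ℤ)^s * (stirling2H s j k : ℤ)) *
            ∏ i ∈ Finset.range k, (Polynomial.X - Polynomial.C ((i : ℤ) ^ s)) := by
      intro k
      rw [Finset.prod_range_succ, map_mul]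
      ring
    rw [Finset.sum_congr rfl (fun k _ => step k), Finset.sum_add_distrib]
    have h0 : ((0:ℤ))^s = 0 := zero_pow (by omega)
    have h2 : ∑ k ∈ Finset.range (j + 1), Polynomial.C ((k:ℤ)^s * (stirling2H s j k : ℤ)) *
          ∏ i ∈ Finset.range k, (Polynomial.X - Polynomial.C ((i : ℤ) ^ s))
        = ∑ k ∈ Finset.range (j + 1), Polynomial.C (((k+1:ℕ):ℤ)^s * (stirling2H s j (k+1) : ℤ)) *
          ∏ i ∈ Finset.range (k+1), (Polynomial.X - Polynomial.C ((i : ℤ) ^ s)) := by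
      rw [Finset.sum_range_succ' (fun k => Polynomial.C ((k:ℤ)^s * (stirling2H s j k : ℤ)) *
          ∏ i ∈ Finset.range k, (Polynomial.X - Polynomial.C ((i : ℤ) ^ s)))]
      rw [Finset.sum_range_succ (fun k => Polynomial.C (((k+1:ℕ):ℤ)^s * (stirling2H s j (k+1) : ℤ)) *
          ∏ i ∈ Finset.range (k+1), (Polynomial.X - Polynomial.C ((i : ℤ) ^ s)))]
      rw [stirling2H_eq_zero s j (j+1) (by omega)]
      simp [h0]
    rw [h2, ← Finset.sum_add_distrib]
    rw [Finset.sum_range_succ' (fun k => Polynomial.C (stirling2H s (j+1) k : ℤ) *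
        ∏ i ∈ Finset.range k, (Polynomial.X - Polynomial.C ((i : ℤ) ^ s)))]
    have hz : (stirling2H s (j+1) 0 : ℤ) = 0 := by rfl
    rw [hz]
    simp only [map_zero, zero_mul, add_zero]
    apply Finset.sum_congr rfl
    intro k _
    have hrec : (stirling2H s (j+1) (k+1) : ℤ)
        = (stirling2H s j k : ℤ) + ((k+1:ℕ):ℤ)^s * (stirling2H s j (k+1) : ℤ) := by
      simp only [stirling2H]; push_cast; ring
    rw [hrec, map_add, map_mul]
    ring

theorem risingH_eq_sum_lahOrd_fallingH (s n : ℕ) (hs : 1 ≤ s) :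
    ∏ i ∈ Finset.range n, (Polynomial.X + Polynomial.C ((i : ℤ) ^ s)) =
      ∑ k ∈ Finset.range (n + 1),
        Polynomial.C (lahOrd s n k : ℤ) *
          ∏ i ∈ Finset.range k, (Polynomial.X - Polynomial.C ((i : ℤ) ^ s)) := by
  rw [risingH_expand s n hs]
  have expand : ∀ j ∈ Finset.range (n+1),
      Polynomial.C (stirling1H s n j : ℤ) * Polynomial.X ^ j =
      ∑ k ∈ Finset.range (n + 1), Polynomial.C ((stirling1H s n j : ℤ) * (stirling2H s j k : ℤ)) *
        ∏ i ∈ Finset.range k, (Polynomial.X - Polynomial.C ((i : ℤ) ^ s)) := by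
    intro j hj
    rw [Finset.mem_range] at hj
    calc Polynomial.C (stirling1H s n j : ℤ) * Polynomial.X ^ j
        = ∑ k ∈ Finset.range (j + 1), Polynomial.C ((stirling1H s n j : ℤ) * (stirling2H s j k : ℤ)) *
            ∏ i ∈ Finset.range k, (Polynomial.X - Polynomial.C ((i : ℤ) ^ s)) := by
          rw [pow_expand s hs j, Finset.mul_sum]
          apply Finset.sum_congr rfl
          intro k _
          rw [map_mul]; ring
      _ = ∑ k ∈ Finset.range (n + 1), Polynomial.C ((stirling1H s n j : ℤ) * (stirling2H s j k : ℤ)) *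
            ∏ i ∈ Finset.range k, (Polynomial.X - Polynomial.C ((i : ℤ) ^ s)) := by
          apply Finset.sum_subset (Finset.range_subset_range.mpr (by omega))
          intro k _ hk
          rw [Finset.mem_range] at hk
          rw [stirling2H_eq_zero s j k (by omega)]
          simp
  rw [Finset.sum_congr rfl expand, Finset.sum_comm]
  apply Finset.sum_congr rfl
  intro k _
  rw [← Finset.sum_mul]
  congr 1
  rw [← map_sum]
  congr 1
  unfold lahOrd
  push_cast
  refine (Finset.sum_subset (fun j hj => ?_) (fun j hj hj2 => ?_)).symm
  · rw [Finset.mem_Icc] at hj; rw [Finset.mem_range]; omega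
  · rw [Finset.mem_range] at hj
    simp only [Finset.mem_Icc, not_and, not_le] at hj2
    have hjk : j < k := by
      by_contra h
      push_neg at h
      exact absurd (hj2 h) (by omega)
    rw [stirling2H_eq_zero s j k hjk]
    simp
end

section
/- For all integers n ≥ 1 and s ≥ 1, the polynomial B_n^s(x) = Σ_{k=0}^{n} k^s · T_s(n,k) · x^k satisfies B_n^s(x) = Σ_{i=0}^{s} S(s,i) · x^i · (d^i/dx^i) ℒ_n^s(x), where S(s,i) are the Stirling numbers of the second kind and d^i/dx^i denotes the i-th iterated formal derivative of polynomials. -/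
open Finset Polynomial

/-- `B_n^s(x) = ∑_{k=0}^{n} k^s T_s(n,k) x^k`. -/
noncomputable def Bpoly (s n : ℕ) : Polynomial ℤ :=
  ∑ k ∈ Finset.range (n + 1),
    Polynomial.C ((k ^ s * lahOrd s n k : ℕ) : ℤ) * Polynomial.X ^ k

lemma stirling2_eq_zero_of_lt : ∀ {n k : ℕ}, n < k → stirling2 n k = 0
  | 0, _ + 1, _ => rfl
  | n + 1, k + 1, h => by
    have h' : n < k := Nat.lt_of_succ_lt_succ h
    simp [stirling2, stirling2_eq_zero_of_lt h',
      stirling2_eq_zero_of_lt (Nat.lt_succ_of_lt h')]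

lemma mul_descFactorial (k i : ℕ) :
    k * k.descFactorial i = k.descFactorial (i + 1) + i * k.descFactorial i := by
  rcases le_or_gt i k with h | h
  · rw [Nat.descFactorial_succ, ← Nat.add_mul]
    congr 1
    omega
  · rw [Nat.descFactorial_eq_zero_iff_lt.mpr h,
      Nat.descFactorial_eq_zero_iff_lt.mpr (Nat.lt_succ_of_lt h)]
    simp

lemma key (s k : ℕ) :
    ∑ i ∈ Finset.range (s + 1), stirling2 s i * k.descFactorial i = k ^ s := by
  induction s with
  | zero => simp [stirling2]
  | succ s ih =>
    rw [Finset.sum_range_succ']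
    have h0 : stirling2 (s + 1) 0 * k.descFactorial 0 = 0 := by simp [stirling2]
    rw [h0, add_zero]
    have hterm : ∀ i, stirling2 (s + 1) (i + 1) * k.descFactorial (i + 1) =
        stirling2 s i * k.descFactorial (i + 1)
          + (i + 1) * stirling2 s (i + 1) * k.descFactorial (i + 1) := by
      intro i; simp [stirling2]; ring
    rw [Finset.sum_congr rfl (fun i _ => hterm i), Finset.sum_add_distrib]
    have h2 : ∑ i ∈ Finset.range (s + 1),
        (i + 1) * stirling2 s (i + 1) * k.descFactorial (i + 1)
        = ∑ i ∈ Finset.range (s + 1), i * stirling2 s i * k.descFactorial i := by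
      have := Finset.sum_range_succ'
        (fun i => i * stirling2 s i * k.descFactorial i) (s + 1)
      rw [Finset.sum_range_succ (fun i => i * stirling2 s i * k.descFactorial i)] at this
      simp only [Nat.zero_mul, add_zero] at this
      rw [← this, stirling2_eq_zero_of_lt (Nat.lt_succ_self s)]
      simp
    rw [h2, pow_succ, ← ih, Finset.sum_mul, ← Finset.sum_add_distrib]
    refine Finset.sum_congr rfl fun i _ => ?_
    calc stirling2 s i * k.descFactorial (i + 1) + i * stirling2 s i * k.descFactorial i
        = stirling2 s i * (k.descFactorial (i + 1) + i * k.descFactorial i) := by ring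
      _ = stirling2 s i * (k * k.descFactorial i) := by rw [mul_descFactorial]
      _ = stirling2 s i * k.descFactorial i * k := by ring

lemma xpow_mul_iterate_derivative (i k : ℕ) :
    (Polynomial.X : Polynomial ℤ) ^ i * Polynomial.derivative^[i] (Polynomial.X ^ k)
      = Polynomial.C ((k.descFactorial i : ℕ) : ℤ) * Polynomial.X ^ k := by
  rw [Polynomial.iterate_derivative_X_pow_eq_C_mul]
  rcases le_or_gt i k with h | h
  · rw [mul_left_comm]
    congr 1
    rw [← pow_add]
    congr 1
    omega
  · rw [Nat.descFactorial_eq_zero_iff_lt.mpr h]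
    simp

theorem Bpoly_eq (n s : ℕ) (hn : 1 ≤ n) (hs : 1 ≤ s) :
    Bpoly s n =
      ∑ i ∈ Finset.range (s + 1),
        Polynomial.C (stirling2 s i : ℤ) * Polynomial.X ^ i *
          (Polynomial.derivative^[i] (lahOrdPoly s n)) := by
  unfold Bpoly lahOrdPoly
  simp only [Polynomial.iterate_derivative_sum, Polynomial.iterate_derivative_C_mul,
    Finset.mul_sum]
  rw [Finset.sum_comm]
  refine Finset.sum_congr rfl fun k _ => ?_
  have : ∀ i, Polynomial.C (stirling2 s i : ℤ) * Polynomial.X ^ i *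
      (Polynomial.C ((lahOrd s n k : ℕ) : ℤ) * Polynomial.derivative^[i] (Polynomial.X ^ k))
      = Polynomial.C ((stirling2 s i * k.descFactorial i * lahOrd s n k : ℕ) : ℤ)
          * Polynomial.X ^ k := by
    intro i
    rw [mul_assoc, mul_left_comm (Polynomial.X ^ i), xpow_mul_iterate_derivative,
      ← mul_assoc, ← mul_assoc, ← Polynomial.C_mul, ← Polynomial.C_mul]
    congr 1
    push_cast
    ring
  have hnat : ∑ i ∈ Finset.range (s + 1),
      stirling2 s i * Nat.descFactorial k i * lahOrd s n k = k ^ s * lahOrd s n k := by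
    rw [← Finset.sum_mul, key]
  rw [Finset.sum_congr rfl (fun i _ => this i), ← Finset.sum_mul, ← map_sum,
    ← Nat.cast_sum, hnat]
end
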